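/- arXiv:1905.12870 — 2 statements merged into one kernel-verified Lean document; each statement's English description precedes it below -/
import Mathlib

section
/- Let f : ℝ → ℝ be convex differentiable on J, A₁,…,Aₙ self-adjoint with spectra in J, and w₁,…,wₙ positive reals summing to 1. Write S = ∑ᵢ wᵢ Aᵢ and define ζ = sup over unit vectors x of (⟨f'(S)·S x, x⟩ − ⟨S x, x⟩·⟨f'(S) x, x⟩). Then f(∑ᵢ wᵢ Aᵢ) ≤ ∑ᵢ wᵢ f(Aᵢ) + ζ·1. -/
open scoped InnerProductSpace
open RCLike

/-!
Fix a unit vector `x` and put `s = ⟪S x, x⟫`, which lies in `J` because `spectrum ℝ S ⊆ J`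
(`S` is squeezed between the scalars `∑ wᵢ min σ(Aᵢ)` and `∑ wᵢ max σ(Aᵢ)`).
The tangent line of `f` at `s` lies below `f`, so `f s + f' s (Aᵢ - s) ≤ f(Aᵢ)`; averaging with
the weights and pairing with `x` kills the linear term, giving `f s ≤ ⟪∑ wᵢ f(Aᵢ) x, x⟫`.
Conversely the tangent line at each `t ∈ σ(S)`, evaluated at `s`, gives
`f t ≤ f s + f' t (t - s)`, i.e. `f(S) ≤ f s + f'(S)(S - s)`, and pairing with `x` bounds the
last term by `ζ`.
-/

theorem ConvexOn.add_deriv_mul_sub_le {f f' : ℝ → ℝ} {J : Set ℝ} (hf : ConvexOn ℝ J f)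
    (hf' : ∀ t ∈ J, HasDerivAt f (f' t) t) {s t : ℝ} (hs : s ∈ J) (ht : t ∈ J) :
    f s + f' s * (t - s) ≤ f t := by
  rcases lt_trichotomy s t with hst | rfl | hts
  · have := hf.le_slope_of_hasDerivAt hs ht hst (hf' s hs)
    rw [slope_def_field, le_div_iff₀ (sub_pos.2 hst)] at this
    linarith
  · simp
  · have := hf.slope_le_of_hasDerivAt ht hs hts (hf' s hs)
    rw [slope_def_field, div_le_iff₀ (sub_pos.2 hts)] at this
    linarith

lemma isSelfAdjoint_sum_smul {R ι : Type*} [AddCommMonoid R] [StarAddMonoid R] [Module ℝ R]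
    [StarModule ℝ R] {t : Finset ι} {a : ι → R} (w : ι → ℝ) (ha : ∀ i ∈ t, IsSelfAdjoint (a i)) :
    IsSelfAdjoint (∑ i ∈ t, w i • a i) :=
  isSelfAdjoint_sum t fun i hi ↦ (IsSelfAdjoint.all (w i)).smul (ha i hi)

section CStarAlgebra

variable {A : Type*} [CStarAlgebra A] [PartialOrder A] [StarOrderedRing A]
  {f f' : ℝ → ℝ} {J : Set ℝ} {a : A} {s : ℝ}

lemma IsSelfAdjoint.algebraMap_sInf_spectrum_le (ha : IsSelfAdjoint a) :
    algebraMap ℝ A (sInf (spectrum ℝ a)) ≤ a :=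
  algebraMap_le_of_le_spectrum fun _ hμ ↦ csInf_le (spectrum.isCompact a).bddBelow hμ

lemma IsSelfAdjoint.le_algebraMap_sSup_spectrum (ha : IsSelfAdjoint a) :
    a ≤ algebraMap ℝ A (sSup (spectrum ℝ a)) :=
  le_algebraMap_of_spectrum_le fun _ hμ ↦ le_csSup (spectrum.isCompact a).bddAbove hμ

lemma spectrum_sum_smul_subset {ι : Type*} {t : Finset ι} {a : ι → A} {w : ι → ℝ}
    (hJ : Convex ℝ J) (ha : ∀ i ∈ t, IsSelfAdjoint (a i)) (hσ : ∀ i ∈ t, spectrum ℝ (a i) ⊆ J)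
    (hw : ∀ i ∈ t, 0 ≤ w i) (hw1 : ∑ i ∈ t, w i = 1) :
    spectrum ℝ (∑ i ∈ t, w i • a i) ⊆ J := by
  intro μ hμ
  obtain _ | _ := subsingleton_or_nontrivial A
  · simp [spectrum.of_subsingleton] at hμ
  have hsa := isSelfAdjoint_sum_smul w ha
  have hne i (hi : i ∈ t) := ContinuousFunctionalCalculus.spectrum_nonempty (R := ℝ) _ (ha i hi)
  have hlow : algebraMap ℝ A (∑ i ∈ t, w i • sInf (spectrum ℝ (a i))) ≤ ∑ i ∈ t, w i • a i := by
    rw [map_sum]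
    gcongr with i hi
    rw [smul_eq_mul, map_mul, ← Algebra.smul_def]
    exact smul_le_smul_of_nonneg_left (ha i hi).algebraMap_sInf_spectrum_le (hw i hi)
  have hup : ∑ i ∈ t, w i • a i ≤ algebraMap ℝ A (∑ i ∈ t, w i • sSup (spectrum ℝ (a i))) := by
    rw [map_sum]
    gcongr with i hi
    rw [smul_eq_mul, map_mul, ← Algebra.smul_def]
    exact smul_le_smul_of_nonneg_left (ha i hi).le_algebraMap_sSup_spectrum (hw i hi)
  refine hJ.ordConnected.out ?_ ?_
    ⟨(algebraMap_le_iff_le_spectrum hsa).1 hlow μ hμ, (le_algebraMap_iff_spectrum_le hsa).1 hup μ hμ⟩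
  · exact hJ.sum_mem hw hw1 fun i hi ↦ hσ i hi ((spectrum.isCompact (a i)).sInf_mem (hne i hi))
  · exact hJ.sum_mem hw hw1 fun i hi ↦ hσ i hi ((spectrum.isCompact (a i)).sSup_mem (hne i hi))

theorem ConvexOn.algebraMap_add_smul_sub_le_cfc (hf : ConvexOn ℝ J f)
    (hf' : ∀ t ∈ J, HasDerivAt f (f' t) t) (ha : IsSelfAdjoint a) (hσ : spectrum ℝ a ⊆ J)
    (hs : s ∈ J) :
    algebraMap ℝ A (f s) + f' s • (a - algebraMap ℝ A s) ≤ cfc f a := by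
  have hfc : ContinuousOn f (spectrum ℝ a) := fun t ht ↦
    (hf' t (hσ ht)).continuousAt.continuousWithinAt
  calc algebraMap ℝ A (f s) + f' s • (a - algebraMap ℝ A s)
      = cfc (fun t ↦ f s + f' s * (t - s)) a := by
        rw [cfc_add .., cfc_const_mul .., cfc_sub .., cfc_const .., cfc_const .., cfc_id' ..]
    _ ≤ cfc f a := cfc_mono fun t ht ↦ hf.add_deriv_mul_sub_le hf' hs (hσ ht)

theorem ConvexOn.algebraMap_add_smul_sub_le_sum_smul_cfc {ι : Type*} {t : Finset ι} {a : ι → A}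
    {w : ι → ℝ} (hf : ConvexOn ℝ J f) (hf' : ∀ t ∈ J, HasDerivAt f (f' t) t)
    (ha : ∀ i ∈ t, IsSelfAdjoint (a i)) (hσ : ∀ i ∈ t, spectrum ℝ (a i) ⊆ J)
    (hw : ∀ i ∈ t, 0 ≤ w i) (hw1 : ∑ i ∈ t, w i = 1) (hs : s ∈ J) :
    algebraMap ℝ A (f s) + f' s • (∑ i ∈ t, w i • a i - algebraMap ℝ A s) ≤
      ∑ i ∈ t, w i • cfc f (a i) :=
  calc algebraMap ℝ A (f s) + f' s • (∑ i ∈ t, w i • a i - algebraMap ℝ A s)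
      = ∑ i ∈ t, w i • (algebraMap ℝ A (f s) + f' s • (a i - algebraMap ℝ A s)) := by
        simp only [smul_add, smul_sub, smul_comm (w _) (f' s), Finset.sum_add_distrib,
          Finset.sum_sub_distrib, ← Finset.smul_sum, ← Finset.sum_smul, hw1, one_smul]
    _ ≤ ∑ i ∈ t, w i • cfc f (a i) := Finset.sum_le_sum fun i hi ↦
        smul_le_smul_of_nonneg_left
          (hf.algebraMap_add_smul_sub_le_cfc hf' (ha i hi) (hσ i hi) hs) (hw i hi)

theorem ConvexOn.cfc_le_algebraMap_add_cfc_mul_sub (hf : ConvexOn ℝ J f)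
    (hf' : ∀ t ∈ J, HasDerivAt f (f' t) t) (hf'c : ContinuousOn f' J) (ha : IsSelfAdjoint a)
    (hσ : spectrum ℝ a ⊆ J) (hs : s ∈ J) :
    cfc f a ≤ algebraMap ℝ A (f s) + cfc f' a * (a - algebraMap ℝ A s) := by
  have hfc : ContinuousOn f (spectrum ℝ a) := fun t ht ↦
    (hf' t (hσ ht)).continuousAt.continuousWithinAt
  have hf'c : ContinuousOn f' (spectrum ℝ a) := hf'c.mono hσ
  calc cfc f a ≤ cfc (fun t ↦ f s + f' t * (t - s)) a := cfc_mono fun t ht ↦ by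
        linarith [hf.add_deriv_mul_sub_le hf' (hσ ht) hs]
    _ = algebraMap ℝ A (f s) + cfc f' a * (a - algebraMap ℝ A s) := by
        rw [cfc_add .., cfc_mul .., cfc_sub .., cfc_const .., cfc_const .., cfc_id' ..]

end CStarAlgebra

namespace ContinuousLinearMap

variable {H : Type*} [NormedAddCommGroup H] [InnerProductSpace ℂ H]

lemma abs_re_inner_apply_self_le (T : H →L[ℂ] H) (x : H) :
    |re ⟪T x, x⟫_ℂ| ≤ ‖T‖ * ‖x‖ * ‖x‖ :=
  (abs_re_le_norm _).trans <| (norm_inner_le_norm _ _).trans <|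
    mul_le_mul_of_nonneg_right (T.le_opNorm x) (norm_nonneg x)

lemma bddAbove_range_re_inner_sub_mul (T₁ T₂ T₃ : H →L[ℂ] H) :
    BddAbove (Set.range fun x : {x : H // ‖x‖ = 1} ↦
      re ⟪T₁ x, x⟫_ℂ - re ⟪T₂ x, x⟫_ℂ * re ⟪T₃ x, x⟫_ℂ) := by
  refine ⟨‖T₁‖ + ‖T₂‖ * ‖T₃‖, ?_⟩
  rintro _ ⟨⟨x, hx⟩, rfl⟩
  have h₁ := T₁.abs_re_inner_apply_self_le x
  have h₂ := T₂.abs_re_inner_apply_self_le x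
  have h₃ := T₃.abs_re_inner_apply_self_le x
  simp only [hx, mul_one] at h₁ h₂ h₃ ⊢
  calc _ ≤ |re ⟪T₁ x, x⟫_ℂ| + |re ⟪T₂ x, x⟫_ℂ| * |re ⟪T₃ x, x⟫_ℂ| := by
        rw [← abs_mul]
        linarith [le_abs_self (re ⟪T₁ x, x⟫_ℂ), neg_abs_le (re ⟪T₂ x, x⟫_ℂ * re ⟪T₃ x, x⟫_ℂ)]
    _ ≤ ‖T₁‖ + ‖T₂‖ * ‖T₃‖ := by gcongr

lemma re_inner_le_re_inner_of_le {T T' : H →L[ℂ] H} (h : T ≤ T') (x : H) :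
    re ⟪T x, x⟫_ℂ ≤ re ⟪T' x, x⟫_ℂ := by
  simpa [inner_sub_left] using h.re_inner_nonneg_left x

variable [CompleteSpace H]

lemma le_of_re_inner_le_of_norm_eq_one {T T' : H →L[ℂ] H} (hT : IsSelfAdjoint T)
    (hT' : IsSelfAdjoint T') (h : ∀ x, ‖x‖ = 1 → re ⟪T x, x⟫_ℂ ≤ re ⟪T' x, x⟫_ℂ) : T ≤ T' := by
  refine (le_def T T').2 (isPositive_def'.2 ⟨hT'.sub hT, fun x ↦ ?_⟩)
  rcases eq_or_ne x 0 with rfl | hx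
  · simp [reApplyInnerSelf_apply]
  obtain ⟨u, hu, hxu⟩ : ∃ u : H, ‖u‖ = 1 ∧ x = (‖x‖ : ℂ) • u :=
    ⟨(‖x‖⁻¹ : ℂ) • x, by simp [norm_smul, hx], by simp [smul_smul, hx]⟩
  rw [hxu, reApplyInnerSelf_smul, reApplyInnerSelf_apply]
  exact mul_nonneg (sq_nonneg _) (by simpa [inner_sub_left] using h u hu)

end ContinuousLinearMap

section HilbertSpace

open ContinuousLinearMap

variable {H : Type*} [NormedAddCommGroup H] [InnerProductSpace ℂ H] [CompleteSpace H]
  {f f' : ℝ → ℝ} {J : Set ℝ} {x : H}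

lemma IsSelfAdjoint.re_inner_mem_of_spectrum_subset {T : H →L[ℂ] H} (hT : IsSelfAdjoint T)
    (hJ : Convex ℝ J) (hσ : spectrum ℝ T ⊆ J) (hx : ‖x‖ = 1) : re ⟪T x, x⟫_ℂ ∈ J := by
  have : Nontrivial H := ⟨⟨x, 0, by rintro rfl; simp at hx⟩⟩
  have hne := ContinuousFunctionalCalculus.spectrum_nonempty (R := ℝ) T hT
  refine hJ.ordConnected.out (hσ ((spectrum.isCompact T).sInf_mem hne))
    (hσ ((spectrum.isCompact T).sSup_mem hne)) ⟨?_, ?_⟩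
  · simpa [hx] using re_inner_le_re_inner_of_le hT.algebraMap_sInf_spectrum_le x
  · simpa [hx] using re_inner_le_re_inner_of_le hT.le_algebraMap_sSup_spectrum x

theorem ConvexOn.apply_re_inner_le_re_inner_sum_smul_cfc {ι : Type*} {t : Finset ι}
    {a : ι → H →L[ℂ] H} {w : ι → ℝ} (hf : ConvexOn ℝ J f) (hf' : ∀ t ∈ J, HasDerivAt f (f' t) t)
    (ha : ∀ i ∈ t, IsSelfAdjoint (a i)) (hσ : ∀ i ∈ t, spectrum ℝ (a i) ⊆ J)
    (hw : ∀ i ∈ t, 0 ≤ w i) (hw1 : ∑ i ∈ t, w i = 1) (hx : ‖x‖ = 1) :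
    f (re ⟪(∑ i ∈ t, w i • a i) x, x⟫_ℂ) ≤ re ⟪(∑ i ∈ t, w i • cfc f (a i)) x, x⟫_ℂ := by
  have hs := (isSelfAdjoint_sum_smul w ha).re_inner_mem_of_spectrum_subset hf.1
    (spectrum_sum_smul_subset hf.1 ha hσ hw hw1) hx
  have key := hf.algebraMap_add_smul_sub_le_sum_smul_cfc hf' ha hσ hw hw1 hs
  generalize ∑ i ∈ t, w i • a i = S at key ⊢
  simpa [hx] using re_inner_le_re_inner_of_le key x

theorem ConvexOn.re_inner_cfc_le {T : H →L[ℂ] H} {s : ℝ} (hf : ConvexOn ℝ J f)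
    (hf' : ∀ t ∈ J, HasDerivAt f (f' t) t) (hf'c : ContinuousOn f' J) (hT : IsSelfAdjoint T)
    (hσ : spectrum ℝ T ⊆ J) (hs : s ∈ J) (hx : ‖x‖ = 1) :
    re ⟪cfc f T x, x⟫_ℂ ≤ f s + (re ⟪(cfc f' T * T) x, x⟫_ℂ - s * re ⟪cfc f' T x, x⟫_ℂ) := by
  simpa [hx] using re_inner_le_re_inner_of_le
    (hf.cfc_le_algebraMap_add_cfc_mul_sub hf' hf'c hT hσ hs) x

end HilbertSpace

/-- Scalar-weight operator Jensen-type inequality without operator convexity. -/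
theorem operator_jensen_weights {H : Type*}
    [NormedAddCommGroup H] [InnerProductSpace ℂ H] [CompleteSpace H]
    (f f' : ℝ → ℝ) (J : Set ℝ) (hf : ConvexOn ℝ J f)
    (hf' : ∀ t ∈ J, HasDerivAt f (f' t) t) (hf'c : ContinuousOn f' J)
    (n : ℕ) (A : Fin n → H →L[ℂ] H) (w : Fin n → ℝ)
    (hA : ∀ i, IsSelfAdjoint (A i)) (hspec : ∀ i, spectrum ℝ (A i) ⊆ J)
    (hw : ∀ i, 0 < w i) (hw1 : ∑ i, w i = 1)
    (S : H →L[ℂ] H) (hS : S = ∑ i, w i • A i)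
    (ζ : ℝ)
    (hζ : ζ = ⨆ x : {x : H // ‖x‖ = 1},
      (RCLike.re ⟪(cfc f' S * S) (x : H), (x : H)⟫_ℂ
        - RCLike.re ⟪S (x : H), (x : H)⟫_ℂ
          * RCLike.re ⟪cfc f' S (x : H), (x : H)⟫_ℂ)) :
    cfc f (∑ i, w i • A i) ≤ ∑ i, w i • cfc f (A i) + ζ • (1 : H →L[ℂ] H) := by
  rw [← hS]
  have hA' : ∀ i ∈ Finset.univ, IsSelfAdjoint (A i) := fun i _ ↦ hA i
  have hspec' : ∀ i ∈ Finset.univ, spectrum ℝ (A i) ⊆ J := fun i _ ↦ hspec i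
  have hw' : ∀ i ∈ Finset.univ, 0 ≤ w i := fun i _ ↦ (hw i).le
  have hSsa : IsSelfAdjoint S := hS ▸ isSelfAdjoint_sum_smul w hA'
  have hσS : spectrum ℝ S ⊆ J := hS ▸ spectrum_sum_smul_subset hf.1 hA' hspec' hw' hw1
  have hrhs : IsSelfAdjoint (∑ i, w i • cfc f (A i) + ζ • (1 : H →L[ℂ] H)) :=
    (isSelfAdjoint_sum_smul w fun i _ ↦ cfc_predicate f (A i)).add
      ((IsSelfAdjoint.all ζ).smul (.one _))
  refine ContinuousLinearMap.le_of_re_inner_le_of_norm_eq_one (cfc_predicate f S) hrhs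
    fun x hx ↦ ?_
  have hjensen := hf.apply_re_inner_le_re_inner_sum_smul_cfc hf' hA' hspec' hw' hw1 hx
  rw [← hS] at hjensen
  have hbracket := hζ ▸
    le_ciSup (ContinuousLinearMap.bddAbove_range_re_inner_sub_mul (cfc f' S * S) S (cfc f' S))
      ⟨x, hx⟩
  calc re ⟪cfc f S x, x⟫_ℂ
      ≤ f (re ⟪S x, x⟫_ℂ) +
          (re ⟪(cfc f' S * S) x, x⟫_ℂ - re ⟪S x, x⟫_ℂ * re ⟪cfc f' S x, x⟫_ℂ) :=
        hf.re_inner_cfc_le hf' hf'c hSsa hσS (hSsa.re_inner_mem_of_spectrum_subset hf.1 hσS hx) hx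
    _ ≤ re ⟪(∑ i, w i • cfc f (A i)) x, x⟫_ℂ + ζ := add_le_add hjensen hbracket
    _ = re ⟪(∑ i, w i • cfc f (A i) + ζ • (1 : H →L[ℂ] H)) x, x⟫_ℂ := by simp [hx]
end

section
/- Let A₁,…,Aₙ be self-adjoint operators with spectra in an interval J, Φ₁,…,Φₙ : B(H) → B(K) positive linear maps with ∑ᵢ Φᵢ(1_H) = 1_K, f : J → ℝ convex differentiable, and S = ∑ᵢ Φᵢ(Aᵢ). Then for every unit vector x ∈ K: ⟨f(S) x, x⟩ ≤ f(⟨S x, x⟩) + ⟨f'(S)·S x, x⟩ − ⟨S x, x⟩·⟨f'(S) x, x⟩. -/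
open scoped InnerProductSpace
open Set

/-!
Convexity gives the tangent-line bound `f t ≤ f c + f' t * (t - c)` for `t, c ∈ J`. Taking
`c = ⟨S x, x⟩` and applying the functional calculus of `S` turns it into the operator inequality
`f(S) ≤ f(c) + f'(S) S - c f'(S)`, which is evaluated at `x`. This needs `spectrum S ⊆ J` and
`c ∈ J`: if `m` and `M` are the extreme points of the spectra of the `Aᵢ`, then `m ≤ Aᵢ ≤ M`, and
positive unital maps preserve these bounds, so `m ≤ S ≤ M`.
-/

theorem ConvexOn.add_mul_sub_le_of_hasDerivAt {f f' : ℝ → ℝ} {J : Set ℝ} (hf : ConvexOn ℝ J f)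
    (hf' : ∀ t ∈ J, HasDerivAt f (f' t) t) {t c : ℝ} (ht : t ∈ J) (hc : c ∈ J) :
    f t + f' t * (c - t) ≤ f c := by
  rcases lt_trichotomy t c with htc | rfl | hct
  · have := hf.le_slope_of_hasDerivAt ht hc htc (hf' t ht)
    rw [slope_def_field, le_div_iff₀ (sub_pos.2 htc)] at this
    linarith
  · simp
  · have := hf.slope_le_of_hasDerivAt hc ht hct (hf' t ht)
    rw [slope_def_field, div_le_iff₀ (sub_pos.2 hct)] at this
    linarith

theorem IsCompact.exists_subset_Icc_of_subset {s J : Set ℝ} (hs : IsCompact s) (hne : s.Nonempty)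
    (hsJ : s ⊆ J) : ∃ m ∈ J, ∃ M ∈ J, s ⊆ Icc m M :=
  ⟨sInf s, hsJ (hs.sInf_mem hne), sSup s, hsJ (hs.sSup_mem hne),
    subset_Icc_csInf_csSup hs.bddBelow hs.bddAbove⟩

section PositiveMaps

variable {ι A B : Type*} [Fintype ι]

theorem sum_apply_mono [AddCommGroup A] [PartialOrder A] [IsOrderedAddMonoid A] [Module ℝ A]
    [AddCommGroup B] [PartialOrder B] [IsOrderedAddMonoid B] [Module ℝ B] (Φ : ι → A →ₗ[ℝ] B)
    (hΦ : ∀ i a, 0 ≤ a → 0 ≤ Φ i a) {a b : ι → A} (hab : ∀ i, a i ≤ b i) :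
    ∑ i, Φ i (a i) ≤ ∑ i, Φ i (b i) :=
  Finset.sum_le_sum fun i _ => sub_nonneg.1 <| by
    simpa only [map_sub] using hΦ i _ (sub_nonneg.2 (hab i))

variable [Ring A] [Algebra ℝ A] [Ring B] [Algebra ℝ B]

theorem sum_apply_algebraMap (Φ : ι → A →ₗ[ℝ] B) (hΦ : ∑ i, Φ i 1 = 1) (r : ℝ) :
    ∑ i, Φ i (algebraMap ℝ A r) = algebraMap ℝ B r := by
  simp only [Algebra.algebraMap_eq_smul_one, map_smul, ← Finset.smul_sum, hΦ]

theorem sum_apply_mem_Icc_algebraMap [PartialOrder A] [IsOrderedAddMonoid A] [PartialOrder B]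
    [IsOrderedAddMonoid B] (Φ : ι → A →ₗ[ℝ] B) (hΦ : ∀ i a, 0 ≤ a → 0 ≤ Φ i a)
    (hunital : ∑ i, Φ i 1 = 1) {m M : ℝ}
    {a : ι → A} (ha : ∀ i, a i ∈ Icc (algebraMap ℝ A m) (algebraMap ℝ A M)) :
    ∑ i, Φ i (a i) ∈ Icc (algebraMap ℝ B m) (algebraMap ℝ B M) := by
  rw [← sum_apply_algebraMap Φ hunital m, ← sum_apply_algebraMap Φ hunital M]
  exact ⟨sum_apply_mono Φ hΦ fun i => (ha i).1, sum_apply_mono Φ hΦ fun i => (ha i).2⟩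

end PositiveMaps

section CStarAlgebra

variable {A : Type*} [CStarAlgebra A] [PartialOrder A] [StarOrderedRing A] {a : A}

theorem IsSelfAdjoint.mem_Icc_algebraMap_iff (ha : IsSelfAdjoint a) {m M : ℝ} :
    a ∈ Icc (algebraMap ℝ A m) (algebraMap ℝ A M) ↔ spectrum ℝ a ⊆ Icc m M := by
  simp only [mem_Icc, algebraMap_le_iff_le_spectrum ha, le_algebraMap_iff_spectrum_le ha]
  exact ⟨fun h t ht => ⟨h.1 t ht, h.2 t ht⟩, fun h => ⟨fun t ht => (h ht).1, fun t ht => (h ht).2⟩⟩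

theorem ConvexOn.cfc_le_of_hasDerivAt {f f' : ℝ → ℝ} {J : Set ℝ} (hf : ConvexOn ℝ J f)
    (hf' : ∀ t ∈ J, HasDerivAt f (f' t) t) (hf'c : ContinuousOn f' J) (ha : IsSelfAdjoint a)
    (hspec : spectrum ℝ a ⊆ J) {c : ℝ} (hc : c ∈ J) :
    cfc f a ≤ algebraMap ℝ A (f c) + cfc f' a * a - c • cfc f' a := by
  have hfa : ContinuousOn f (spectrum ℝ a) := fun t ht =>
    (hf' t (hspec ht)).continuousAt.continuousWithinAt
  have hf'a : ContinuousOn f' (spectrum ℝ a) := hf'c.mono hspec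
  calc cfc f a ≤ cfc (fun t => f c + f' t * t - c * f' t) a := by
        refine (cfc_le_iff _ _ a).2 fun t ht => ?_
        linarith [hf.add_mul_sub_le_of_hasDerivAt hf' (hspec ht) hc]
    _ = _ := by
        rw [cfc_sub .., cfc_const_add .., cfc_mul .., cfc_id' ℝ a, cfc_const_mul ..]

end CStarAlgebra

section Hilbert

variable {𝕜 E : Type*} [RCLike 𝕜] [NormedAddCommGroup E] [InnerProductSpace 𝕜 E]

theorem ContinuousLinearMap.re_inner_apply_self_mono {S T : E →L[𝕜] E} (h : S ≤ T) (x : E) :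
    RCLike.re ⟪S x, x⟫_𝕜 ≤ RCLike.re ⟪T x, x⟫_𝕜 := by
  have := h.re_inner_nonneg_left x
  rw [sub_apply, inner_sub_left, map_sub] at this
  linarith

end Hilbert

section ComplexHilbert

variable {E : Type*} [NormedAddCommGroup E] [InnerProductSpace ℂ E]

theorem ContinuousLinearMap.re_inner_smul_apply_self (r : ℝ) (T : E →L[ℂ] E) (x : E) :
    RCLike.re ⟪(r • T) x, x⟫_ℂ = r * RCLike.re ⟪T x, x⟫_ℂ := by
  rw [smul_apply, RCLike.real_smul_eq_coe_smul (K := ℂ), inner_smul_real_left, RCLike.smul_re]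

theorem ContinuousLinearMap.re_inner_algebraMap_apply_self (r : ℝ) (x : E) :
    RCLike.re ⟪algebraMap ℝ (E →L[ℂ] E) r x, x⟫_ℂ = r * ‖x‖ ^ 2 := by
  rw [Algebra.algebraMap_eq_smul_one, re_inner_smul_apply_self, one_apply_eq_self,
    inner_self_eq_norm_sq]

theorem ContinuousLinearMap.re_inner_apply_self_mem_Icc {T : E →L[ℂ] E} {m M : ℝ}
    (hT : T ∈ Icc (algebraMap ℝ _ m) (algebraMap ℝ _ M)) {x : E} (hx : ‖x‖ = 1) :
    RCLike.re ⟪T x, x⟫_ℂ ∈ Icc m M := by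
  have hm := re_inner_apply_self_mono hT.1 x
  have hM := re_inner_apply_self_mono hT.2 x
  simp only [re_inner_algebraMap_apply_self, hx, one_pow, mul_one] at hm hM
  exact ⟨hm, hM⟩

end ComplexHilbert

/-- Pointwise converse of `f(⟨Sx,x⟩) ≤ ⟨f(S)x,x⟩`. -/
theorem pointwise_converse_vector_jensen {H K : Type*}
    [NormedAddCommGroup H] [InnerProductSpace ℂ H] [CompleteSpace H]
    [NormedAddCommGroup K] [InnerProductSpace ℂ K] [CompleteSpace K]
    (f f' : ℝ → ℝ) (J : Set ℝ) (hf : ConvexOn ℝ J f)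
    (hf' : ∀ t ∈ J, HasDerivAt f (f' t) t) (hf'c : ContinuousOn f' J)
    (n : ℕ) (A : Fin n → H →L[ℂ] H)
    (Φ : Fin n → (H →L[ℂ] H) →ₗ[ℂ] (K →L[ℂ] K))
    (hA : ∀ i, IsSelfAdjoint (A i)) (hspec : ∀ i, spectrum ℝ (A i) ⊆ J)
    (hΦpos : ∀ i, ∀ T : H →L[ℂ] H, T.IsPositive → (Φ i T).IsPositive)
    (hunital : ∑ i, Φ i 1 = 1)
    (S : K →L[ℂ] K) (hS : S = ∑ i, Φ i (A i))
    (x : K) (hx : ‖x‖ = 1) :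
    RCLike.re ⟪cfc f S x, x⟫_ℂ ≤
      f (RCLike.re ⟪S x, x⟫_ℂ)
        + RCLike.re ⟪(cfc f' S * S) x, x⟫_ℂ
        - RCLike.re ⟪S x, x⟫_ℂ * RCLike.re ⟪cfc f' S x, x⟫_ℂ := by
  let Ψ i := (Φ i).restrictScalars ℝ
  have hΨpos : ∀ i T, 0 ≤ T → 0 ≤ Ψ i T := fun i T hT =>
    (Φ i T).nonneg_iff_isPositive.2 (hΦpos i T (T.nonneg_iff_isPositive.1 hT))
  -- `x ≠ 0` makes `K`, hence some `Φ i 1`, hence `H →L[ℂ] H` nontrivial: the spectra are nonempty.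
  have : Nontrivial K := nontrivial_of_ne x 0 (by simp [← norm_ne_zero_iff, hx])
  obtain ⟨i₀, -, hi₀⟩ := Finset.exists_ne_zero_of_sum_ne_zero (hunital ▸ one_ne_zero)
  have : Nontrivial (H →L[ℂ] H) := nontrivial_of_ne 1 0 fun h => hi₀ (by rw [h, map_zero])
  obtain ⟨m, hm, M, hM, hmM⟩ := (isCompact_iUnion fun i => spectrum.isCompact (A i))
    |>.exists_subset_Icc_of_subset
      ((ContinuousFunctionalCalculus.spectrum_nonempty (A i₀) (hA i₀)).mono (subset_iUnion _ i₀))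
      (iUnion_subset hspec)
  have hIccJ : Icc m M ⊆ J := hf.1.ordConnected.out hm hM
  have hSIcc : S ∈ Icc (algebraMap ℝ _ m) (algebraMap ℝ _ M) := hS ▸
    sum_apply_mem_Icc_algebraMap Ψ hΨpos hunital fun i =>
      (hA i).mem_Icc_algebraMap_iff.2 ((subset_iUnion _ i).trans hmM)
  have hSsa : IsSelfAdjoint S := .of_ge hSIcc.1 (.algebraMap _ (.all m))
  have hcJ : RCLike.re ⟪S x, x⟫_ℂ ∈ J :=
    hIccJ (ContinuousLinearMap.re_inner_apply_self_mem_Icc hSIcc hx)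
  have hle := ContinuousLinearMap.re_inner_apply_self_mono (hf.cfc_le_of_hasDerivAt hf' hf'c hSsa
    ((hSsa.mem_Icc_algebraMap_iff.1 hSIcc).trans hIccJ) hcJ) x
  simpa only [add_apply, sub_apply, inner_add_left,
    inner_sub_left, map_add, map_sub, ContinuousLinearMap.re_inner_algebraMap_apply_self,
    ContinuousLinearMap.re_inner_smul_apply_self, hx, one_pow, mul_one] using hle
end
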